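/- arXiv:2509.26445 — 2 statements merged into one kernel-verified Lean document; each statement's English description precedes it below -/
import Mathlib

section
/- For every maximal clique C of routes of G(H) with respect to the canonical bipartite framing and every edge (i,j) ∈ E, the clique C contains at least one route of the form (a,(i,j),c), i.e., at least one route passing through the edge β_{i,j}. -/
/-!
A maximal clique `C` that misses the edge `p = (i,j)` can be extended by a route through `p`.
Give it first entry `1` exactly when `C` has a route through some `(i,j')` with `j < j'` and
first entry `1`, and last entry `2` exactly when `C` has a route through some `(i',j)` with
`i' < i` and last entry `2`. A conflict of this route with some `r ∈ C` would then be a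
conflict between `r` and the route of `C` that forced the choice.
-/

open Finset Filter Pointwise

/-- Neighbors in the right shore `T` of a left vertex `i`. -/
def Nbr (E : Finset (ℕ × ℕ)) (i : ℕ) : Finset ℕ :=
  (E.filter (fun p => p.1 = i)).image Prod.snd

/-- Neighbors in the left shore `S` of a right vertex `j`. -/
def Nbr' (E : Finset (ℕ × ℕ)) (j : ℕ) : Finset ℕ :=
  (E.filter (fun p => p.2 = j)).image Prod.fst

/-- A route of `G(H)`: a triple `(a, (i,j), c)` with `a, c ∈ {1,2}`, `(i,j) ∈ E`,
representing the path `α_{a,i} β_{i,j} γ_{j,c}`. -/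
abbrev Route : Type := ℕ × (ℕ × ℕ) × ℕ

def IsRoute (E : Finset (ℕ × ℕ)) (r : Route) : Prop :=
  (r.1 = 1 ∨ r.1 = 2) ∧ r.2.1 ∈ E ∧ (r.2.2 = 1 ∨ r.2.2 = 2)

/-- Two routes are in conflict with respect to the canonical bipartite framing. -/
def Conflict (r r' : Route) : Prop :=
  (r.2.1 = r'.2.1 ∧
    ((r.1 = 1 ∧ r.2.2 = 2 ∧ r'.1 = 2 ∧ r'.2.2 = 1) ∨
     (r.1 = 2 ∧ r.2.2 = 1 ∧ r'.1 = 1 ∧ r'.2.2 = 2))) ∨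
  (r.2.1.1 = r'.2.1.1 ∧ r.2.1.2 ≠ r'.2.1.2 ∧
    ((r.2.1.2 < r'.2.1.2 ∧ r'.1 = 1 ∧ r.1 = 2) ∨
     (r'.2.1.2 < r.2.1.2 ∧ r.1 = 1 ∧ r'.1 = 2))) ∨
  (r.2.1.2 = r'.2.1.2 ∧ r.2.1.1 ≠ r'.2.1.1 ∧
    ((r.2.1.1 < r'.2.1.1 ∧ r.2.2 = 2 ∧ r'.2.2 = 1) ∨
     (r'.2.1.1 < r.2.1.1 ∧ r'.2.2 = 2 ∧ r.2.2 = 1)))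

/-- A clique: a set of pairwise coherent routes. -/
def IsClique (E : Finset (ℕ × ℕ)) (C : Set Route) : Prop :=
  (∀ r ∈ C, IsRoute E r) ∧ ∀ r ∈ C, ∀ r' ∈ C, r ≠ r' → ¬ Conflict r r'

/-- A maximal clique of routes. -/
def IsMaxClique (E : Finset (ℕ × ℕ)) (C : Set Route) : Prop :=
  IsClique E C ∧ ∀ C' : Set Route, IsClique E C' → C ⊆ C' → C' = C

theorem Conflict.symm {r r' : Route} (h : Conflict r r') : Conflict r' r := by
  rcases h with ⟨he, ⟨h1, h2, h3, h4⟩ | ⟨h1, h2, h3, h4⟩⟩ |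
      ⟨he, hne, ⟨hlt, h1, h2⟩ | ⟨hlt, h1, h2⟩⟩ | ⟨he, hne, ⟨hlt, h1, h2⟩ | ⟨hlt, h1, h2⟩⟩
  · exact Or.inl ⟨he.symm, Or.inr ⟨h3, h4, h1, h2⟩⟩
  · exact Or.inl ⟨he.symm, Or.inl ⟨h3, h4, h1, h2⟩⟩
  · exact Or.inr (Or.inl ⟨he.symm, hne.symm, Or.inr ⟨hlt, h1, h2⟩⟩)
  · exact Or.inr (Or.inl ⟨he.symm, hne.symm, Or.inl ⟨hlt, h1, h2⟩⟩)
  · exact Or.inr (Or.inr ⟨he.symm, hne.symm, Or.inr ⟨hlt, h1, h2⟩⟩)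
  · exact Or.inr (Or.inr ⟨he.symm, hne.symm, Or.inl ⟨hlt, h1, h2⟩⟩)

theorem IsClique.insert {E : Finset (ℕ × ℕ)} {C : Set Route} {s : Route} (hC : IsClique E C)
    (hs : IsRoute E s) (hsC : ∀ r ∈ C, ¬Conflict s r) : IsClique E (insert s C) := by
  refine ⟨fun r hr => ?_, fun r hr r' hr' hne => ?_⟩
  · rcases hr with rfl | hr
    exacts [hs, hC.1 r hr]
  · rcases hr with rfl | hr <;> rcases hr' with rfl | hr'
    · exact absurd rfl hne
    · exact hsC r' hr'
    · exact fun h => hsC r hr h.symm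
    · exact hC.2 r hr r' hr' hne

theorem IsMaxClique.mem_of_forall_not_conflict {E : Finset (ℕ × ℕ)} {C : Set Route} {s : Route}
    (hC : IsMaxClique E C) (hs : IsRoute E s) (hsC : ∀ r ∈ C, ¬Conflict s r) : s ∈ C := by
  rw [← hC.2 _ (hC.1.insert hs hsC) (Set.subset_insert s C)]
  exact Set.mem_insert s C

section FreeRoute

open Classical in
noncomputable def freeFirst (C : Set Route) (p : ℕ × ℕ) : ℕ :=
  if ∃ r ∈ C, r.2.1.1 = p.1 ∧ p.2 < r.2.1.2 ∧ r.1 = 1 then 1 else 2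

open Classical in
noncomputable def freeLast (C : Set Route) (p : ℕ × ℕ) : ℕ :=
  if ∃ r ∈ C, r.2.1.2 = p.2 ∧ r.2.1.1 < p.1 ∧ r.2.2 = 2 then 2 else 1

noncomputable def freeRoute (C : Set Route) (p : ℕ × ℕ) : Route :=
  (freeFirst C p, p, freeLast C p)

variable {C : Set Route} {p : ℕ × ℕ}

theorem isRoute_freeRoute {E : Finset (ℕ × ℕ)} (hp : p ∈ E) : IsRoute E (freeRoute C p) := by
  refine ⟨?_, hp, ?_⟩
  · unfold freeRoute freeFirst; split_ifs <;> simp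
  · unfold freeRoute freeLast; split_ifs <;> simp

theorem freeFirst_eq_one {r : Route} (hr : r ∈ C) (hrow : r.2.1.1 = p.1)
    (hlt : p.2 < r.2.1.2) (hr1 : r.1 = 1) : freeFirst C p = 1 :=
  if_pos ⟨r, hr, hrow, hlt, hr1⟩

theorem exists_of_freeFirst_eq_one (h : freeFirst C p = 1) :
    ∃ r ∈ C, r.2.1.1 = p.1 ∧ p.2 < r.2.1.2 ∧ r.1 = 1 := by
  by_contra hex
  simp [freeFirst, hex] at h

theorem freeLast_eq_two {r : Route} (hr : r ∈ C) (hcol : r.2.1.2 = p.2)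
    (hlt : r.2.1.1 < p.1) (hr2 : r.2.2 = 2) : freeLast C p = 2 :=
  if_pos ⟨r, hr, hcol, hlt, hr2⟩

theorem exists_of_freeLast_eq_two (h : freeLast C p = 2) :
    ∃ r ∈ C, r.2.1.2 = p.2 ∧ r.2.1.1 < p.1 ∧ r.2.2 = 2 := by
  by_contra hex
  simp [freeLast, hex] at h

theorem not_conflict_freeRoute (hC : C.Pairwise fun r r' => ¬Conflict r r')
    (hmiss : ¬∃ r ∈ C, r.2.1 = p) : ∀ r ∈ C, ¬Conflict (freeRoute C p) r := by
  intro r hr hcon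
  unfold freeRoute Conflict at hcon
  dsimp only at hcon
  rcases hcon with ⟨hsame, -⟩ | ⟨hrow, -, ⟨hlt, hr1, ha⟩ | ⟨hlt, ha, hr2⟩⟩ |
      ⟨hcol, -, ⟨hlt, hc, hr1⟩ | ⟨hlt, hr2, hc⟩⟩
  · exact hmiss ⟨r, hr, hsame.symm⟩
  · have := freeFirst_eq_one hr hrow.symm hlt hr1
    omega
  · obtain ⟨r₀, hr₀, hrow₀, hlt₀, hr₀1⟩ := exists_of_freeFirst_eq_one ha
    refine hC hr hr₀ (by rintro rfl; omega) (Or.inr (Or.inl ⟨?_, ?_, Or.inl ⟨?_, hr₀1, hr2⟩⟩))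
    all_goals omega
  · obtain ⟨r₀, hr₀, hcol₀, hlt₀, hr₀2⟩ := exists_of_freeLast_eq_two hc
    refine hC hr₀ hr (by rintro rfl; omega) (Or.inr (Or.inr ⟨?_, ?_, Or.inl ⟨?_, hr₀2, hr1⟩⟩))
    all_goals omega
  · have := freeLast_eq_two hr hcol.symm hlt hr2
    omega

end FreeRoute

theorem maxclique_covers_every_edge_general (E : Finset (ℕ × ℕ)) :
    ∀ C : Set Route, IsMaxClique E C → ∀ p ∈ E, ∃ a c : ℕ, (a, p, c) ∈ C := by
  intro C hC p hp
  by_cases hcov : ∃ r ∈ C, r.2.1 = p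
  · obtain ⟨⟨a, q, c⟩, hr, rfl⟩ := hcov
    exact ⟨a, c, hr⟩
  · exact ⟨_, _, hC.mem_of_forall_not_conflict (isRoute_freeRoute hp)
      (not_conflict_freeRoute hC.1.2 hcov)⟩

/-- Every maximal clique contains at least one route through each edge `β_{i,j}`. -/
theorem maxclique_covers_every_edge (n m : ℕ) (hn : 1 ≤ n) (hm : 1 ≤ m) (E : Finset (ℕ × ℕ))
    (hE : ∀ p ∈ E, 1 ≤ p.1 ∧ p.1 ≤ n ∧ 1 ≤ p.2 ∧ p.2 ≤ m)
    (hdegS : ∀ i ∈ Finset.Icc 1 n, 2 ≤ (Nbr E i).card)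
    (hdegT : ∀ j ∈ Finset.Icc 1 m, 2 ≤ (Nbr' E j).card) :
    ∀ C : Set Route, IsMaxClique E C → ∀ p ∈ E, ∃ a c : ℕ, (a, p, c) ∈ C :=
  maxclique_covers_every_edge_general E
end

section
/- The clique simplices of the canonical bipartite framing form a triangulation of the flow polytope F₁(G(H)); precisely: (i) for every clique C of routes of G(H), the indicator vectors {v_r : r ∈ C} are affinely independent; (ii) F₁(G(H)) is the union, over all maximal cliques C, of the simplices conv{v_r : r ∈ C}; and (iii) for any two cliques C and C', conv{v_r : r ∈ C} ∩ conv{v_r : r ∈ C'} = conv{v_r : r ∈ C ∩ C'}. -/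
open Finset Filter Pointwise

/-- Edges of the extension `G(H)`:
`Sum.inl (a,i)` is `α_{a,i}`, `Sum.inr (Sum.inl (i,j))` is `β_{i,j}`,
`Sum.inr (Sum.inr (j,c))` is `γ_{j,c}`. -/
abbrev GEdge : Type := (ℕ × ℕ) ⊕ ((ℕ × ℕ) ⊕ (ℕ × ℕ))

def IsGEdge (n m : ℕ) (E : Finset (ℕ × ℕ)) : GEdge → Prop
  | Sum.inl q => (q.1 = 1 ∨ q.1 = 2) ∧ q.2 ∈ Finset.Icc 1 n
  | Sum.inr (Sum.inl p) => p ∈ E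
  | Sum.inr (Sum.inr q) => q.1 ∈ Finset.Icc 1 m ∧ (q.2 = 1 ∨ q.2 = 2)

/-- The flow polytope `F₁(G(H))` of unit flows on `G(H)`. -/
def FlowPolytope (n m : ℕ) (E : Finset (ℕ × ℕ)) : Set (GEdge → ℝ) :=
  { x | (∀ e : GEdge, IsGEdge n m E e → 0 ≤ x e) ∧
        (∀ e : GEdge, ¬ IsGEdge n m E e → x e = 0) ∧
        (∀ i ∈ Finset.Icc 1 n,
          x (Sum.inl (1, i)) + x (Sum.inl (2, i)) =
            ∑ j ∈ Nbr E i, x (Sum.inr (Sum.inl (i, j)))) ∧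
        (∀ j ∈ Finset.Icc 1 m,
          (∑ i ∈ Nbr' E j, x (Sum.inr (Sum.inl (i, j)))) =
            x (Sum.inr (Sum.inr (j, 1))) + x (Sum.inr (Sum.inr (j, 2)))) ∧
        (∑ i ∈ Finset.Icc 1 n, (x (Sum.inl (1, i)) + x (Sum.inl (2, i)))) = 1 }

/-- Nonnegative integer flows of size `t` on `G(H)`, i.e., lattice points of the
`t`-th dilate of `F₁(G(H))`. -/
def IntFlows (n m : ℕ) (E : Finset (ℕ × ℕ)) (t : ℕ) : Set (GEdge → ℕ) :=
  { x | (∀ e : GEdge, ¬ IsGEdge n m E e → x e = 0) ∧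
        (∀ i ∈ Finset.Icc 1 n,
          x (Sum.inl (1, i)) + x (Sum.inl (2, i)) =
            ∑ j ∈ Nbr E i, x (Sum.inr (Sum.inl (i, j)))) ∧
        (∀ j ∈ Finset.Icc 1 m,
          (∑ i ∈ Nbr' E j, x (Sum.inr (Sum.inl (i, j)))) =
            x (Sum.inr (Sum.inr (j, 1))) + x (Sum.inr (Sum.inr (j, 2)))) ∧
        (∑ i ∈ Finset.Icc 1 n, (x (Sum.inl (1, i)) + x (Sum.inl (2, i)))) = t }

/-- The indicator vector of a route. -/
def routeVec (r : Route) : GEdge → ℝ := fun e =>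
  if e = Sum.inl (r.1, r.2.1.1) ∨ e = Sum.inr (Sum.inl r.2.1) ∨
     e = Sum.inr (Sum.inr (r.2.1.2, r.2.2)) then 1 else 0

/-!
Every point `x` of `F₁(G(H))` is `∑ w r • v_r` for exactly one nonnegative `w` supported on a
clique. Coherence at `i ∈ S` forces the routes leaving through `α_{1,i}` to occupy the edges
`β_{i,j}` greedily in increasing order of `j`, so their weight on `β_{i,j}` is a clamped prefix
sum of the flow; symmetrically at `j ∈ T` for the routes entering `γ_{j,1}`, in increasing order
of `i`. Since a clique never contains both `(1,(i,j),2)` and `(2,(i,j),1)`, these two shares and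
`x(β_{i,j})` determine the four weights on `β_{i,j}`. Conversely, the weights so defined
reproduce `x` and have clique support, which extends to a maximal clique: this is (ii).
Uniqueness, applied to the positive and negative parts of a linear relation, gives (i), and
applied to two representations of a common point gives (iii).
-/

local notation "α" a:max i:max => (Sum.inl (a, i) : GEdge)
local notation "β" p:max => (Sum.inr (Sum.inl p) : GEdge)
local notation "γ" j:max c:max => (Sum.inr (Sum.inr (j, c)) : GEdge)

lemma min_add_max_zero_min_sub {a b c : ℝ} (hc : 0 ≤ c) :
    min a b + max 0 (min c (a - b)) = min a (b + c) := by
  rcases le_total a b with h | h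
  · rw [max_eq_left (min_le_of_right_le (by linarith)), min_eq_left h,
      min_eq_left (show a ≤ b + c by linarith), add_zero]
  · rcases le_total c (a - b) with h2 | h2
    · rw [min_eq_right h, min_eq_left h2, max_eq_right hc,
        min_eq_right (show b + c ≤ a by linarith)]
    · rw [min_eq_right h, min_eq_right h2, max_eq_right (by linarith),
        min_eq_left (show a ≤ b + c by linarith)]
      ring

section GreedyFill

variable {ι : Type*} [LinearOrder ι] (J : Finset ι) (b : ι → ℝ) (s : ℝ)

/-- The amount landing in `b j` when `s` is poured into the capacities `b` of `J` in increasing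
order. -/
def greedyFill (j : ι) : ℝ :=
  max 0 (min (b j) (s - ∑ k ∈ J with k < j, b k))

variable {J b s}

lemma greedyFill_nonneg (j : ι) : 0 ≤ greedyFill J b s j := le_max_left _ _

lemma greedyFill_le {j : ι} (hb : 0 ≤ b j) : greedyFill J b s j ≤ b j :=
  max_le hb (min_le_left _ _)

lemma sum_greedyFill (hs : 0 ≤ s) (hb : ∀ j ∈ J, 0 ≤ b j) :
    ∑ j ∈ J, greedyFill J b s j = min s (∑ j ∈ J, b j) := by
  induction J using Finset.induction_on_max with
  | empty => simp [hs]
  | insert a J ha ih =>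
    have haJ : a ∉ J := fun h => (ha a h).false
    have hfill : ∀ j ∈ J, greedyFill (insert a J) b s j = greedyFill J b s j := by
      intro j hj
      simp [greedyFill, Finset.filter_insert, (ha j hj).not_gt]
    have hprefix : ∑ k ∈ insert a J with k < a, b k = ∑ k ∈ J, b k := by
      rw [Finset.filter_insert, if_neg (lt_irrefl a), Finset.filter_true_of_mem ha]
    rw [Finset.sum_insert haJ, Finset.sum_insert haJ, Finset.sum_congr rfl hfill,
      ih (fun j hj => hb j (Finset.mem_insert_of_mem hj)), greedyFill, hprefix, add_comm,
      min_add_max_zero_min_sub (hb a (Finset.mem_insert_self a J)), add_comm]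

lemma greedyFill_eq_zero_of_lt (hb : ∀ j ∈ J, 0 ≤ b j) {j k : ι} (hj : j ∈ J) (hjk : j < k)
    (hfill : greedyFill J b s j < b j) : greedyFill J b s k = 0 := by
  have hsub : insert j {i ∈ J | i < j} ⊆ {i ∈ J | i < k} := by
    intro i hi
    simp only [Finset.mem_insert, Finset.mem_filter] at hi ⊢
    rcases hi with rfl | ⟨hi, hij⟩
    exacts [⟨hj, hjk⟩, ⟨hi, hij.trans hjk⟩]
  have hmono : ∑ i ∈ J with i < j, b i + b j ≤ ∑ i ∈ J with i < k, b i := by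
    rw [add_comm, ← Finset.sum_insert (by simp)]
    exact Finset.sum_le_sum_of_subset_of_nonneg hsub fun i hi _ =>
      hb i (Finset.mem_of_mem_filter i hi)
  have hover : s < ∑ i ∈ J with i < j, b i + b j := by
    by_contra! h
    rw [greedyFill, min_eq_left (by linarith), max_eq_right (hb j hj)] at hfill
    exact lt_irrefl _ hfill
  exact le_antisymm (max_le le_rfl (min_le_of_right_le (by linarith))) (greedyFill_nonneg k)

lemma eq_greedyFill_of_coherent {M : ι → ℝ} (hM0 : ∀ j ∈ J, 0 ≤ M j) (hMb : ∀ j ∈ J, M j ≤ b j)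
    (hcoh : ∀ j ∈ J, ∀ k ∈ J, j < k → M j < b j → M k = 0) {j : ι} (hj : j ∈ J) :
    M j = greedyFill J b (∑ k ∈ J, M k) j := by
  have hsplit : ∑ k ∈ J, M k = ∑ k ∈ J with k < j, M k + (M j + ∑ k ∈ J with j < k, M k) := by
    have hrest : {k ∈ J | ¬k < j} = insert j {k ∈ J | j < k} := by
      ext k; simp only [Finset.mem_filter, Finset.mem_insert, not_lt]; grind
    rw [← Finset.sum_filter_add_sum_filter_not J (· < j), hrest, Finset.sum_insert (by simp)]
  have hle : ∑ k ∈ J with k < j, M k ≤ ∑ k ∈ J with k < j, b k :=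
    Finset.sum_le_sum fun k hk => hMb k (Finset.mem_of_mem_filter k hk)
  have hlater : 0 ≤ ∑ k ∈ J with j < k, M k :=
    Finset.sum_nonneg fun k hk => hM0 k (Finset.mem_of_mem_filter k hk)
  have hlater_eq (h : M j < b j) : ∑ k ∈ J with j < k, M k = 0 :=
    Finset.sum_eq_zero fun k hk =>
      hcoh j hj k (Finset.mem_filter.mp hk).1 (Finset.mem_filter.mp hk).2 h
  have hunsat (h : ∑ k ∈ J with k < j, M k < ∑ k ∈ J with k < j, b k) : M j = 0 := by
    obtain ⟨i, hi, hMi⟩ := Finset.exists_lt_of_sum_lt h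
    exact hcoh i (Finset.mem_of_mem_filter i hi) j hj (Finset.mem_filter.mp hi).2 hMi
  rw [greedyFill, hsplit]
  rcases (hMb j hj).lt_or_eq with hMj | hMj <;> rcases hle.lt_or_eq with hL | hL
  · rw [hlater_eq hMj, hunsat hL, max_eq_left (min_le_of_right_le (by linarith))]
  · rw [hlater_eq hMj, hL, add_zero, add_sub_cancel_left, min_eq_right hMj.le,
      max_eq_right (hM0 j hj)]
  · rw [hunsat hL] at hMj ⊢
    rw [max_eq_left (min_le_of_left_le hMj.ge)]
  · rw [hL, add_sub_cancel_left, min_eq_left (by linarith), max_eq_right (hMj ▸ hM0 j hj), hMj]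

end GreedyFill

section CornerWeight

/-- The table on `{1,2}²` with row sums `A, t - A`, column sums `B, t - B` and a zero off-diagonal
entry; it is nonnegative when `A, B ∈ [0, t]`. -/
def cornerWeight (t A B : ℝ) : ℕ → ℕ → ℝ
  | 1, 1 => min A B
  | 1, 2 => A - min A B
  | 2, 1 => B - min A B
  | 2, 2 => t - max A B
  | _, _ => 0

variable {t A B : ℝ}

lemma cornerWeight_eq_zero {a c : ℕ} (h : ¬((a = 1 ∨ a = 2) ∧ (c = 1 ∨ c = 2))) :
    cornerWeight t A B a c = 0 := by
  unfold cornerWeight; split <;> simp_all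

lemma cornerWeight_nonneg (hA : 0 ≤ A) (hAt : A ≤ t) (hB : 0 ≤ B) (hBt : B ≤ t) (a c : ℕ) :
    0 ≤ cornerWeight t A B a c := by
  unfold cornerWeight
  split
  · exact le_min hA hB
  · exact sub_nonneg.mpr (min_le_left A B)
  · exact sub_nonneg.mpr (min_le_right A B)
  · exact sub_nonneg.mpr (max_le hAt hBt)
  · exact le_rfl

lemma cornerWeight_row_one : cornerWeight t A B 1 1 + cornerWeight t A B 1 2 = A := by
  simp [cornerWeight]

lemma cornerWeight_row_two : cornerWeight t A B 2 1 + cornerWeight t A B 2 2 = t - A := by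
  simp only [cornerWeight]; linarith [min_add_max A B]

lemma cornerWeight_col_one : cornerWeight t A B 1 1 + cornerWeight t A B 2 1 = B := by
  simp [cornerWeight]

lemma cornerWeight_col_two : cornerWeight t A B 1 2 + cornerWeight t A B 2 2 = t - B := by
  simp only [cornerWeight]; linarith [min_add_max A B]

lemma cornerWeight_one_two_eq_zero_or :
    cornerWeight t A B 1 2 = 0 ∨ cornerWeight t A B 2 1 = 0 := by
  simp only [cornerWeight]
  rcases le_total A B with h | h
  · left; rw [min_eq_left h, sub_self]
  · right; rw [min_eq_right h, sub_self]

lemma eq_cornerWeight {w : ℕ → ℕ → ℝ} (hw : ∀ a c, 0 ≤ w a c) (hoff : w 1 2 = 0 ∨ w 2 1 = 0)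
    {a c : ℕ} (ha : a = 1 ∨ a = 2) (hc : c = 1 ∨ c = 2) :
    w a c = cornerWeight (w 1 1 + w 1 2 + (w 2 1 + w 2 2)) (w 1 1 + w 1 2) (w 1 1 + w 2 1) a c := by
  have := hw 1 1; have := hw 1 2; have := hw 2 1; have := hw 2 2
  rcases hoff with h | h <;> rcases ha with rfl | rfl <;> rcases hc with rfl | rfl <;>
    simp only [cornerWeight, h, min_def, max_def] <;> split_ifs <;> linarith

lemma cornerWeight_pos_bounds (hA : 0 ≤ A) (hAt : A ≤ t) (hB : 0 ≤ B) (hBt : B ≤ t)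
    {a c : ℕ} (h : 0 < cornerWeight t A B a c) :
    (a = 1 → 0 < A) ∧ (a = 2 → A < t) ∧ (c = 1 → 0 < B) ∧ (c = 2 → B < t) := by
  have h0 := cornerWeight_nonneg hA hAt hB hBt
  have := h0 1 1; have := h0 1 2; have := h0 2 1; have := h0 2 2
  have := cornerWeight_row_one (t := t) (A := A) (B := B)
  have := cornerWeight_row_two (t := t) (A := A) (B := B)
  have := cornerWeight_col_one (t := t) (A := A) (B := B)
  have := cornerWeight_col_two (t := t) (A := A) (B := B)
  by_cases hac : (a = 1 ∨ a = 2) ∧ (c = 1 ∨ c = 2)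
  · obtain ⟨ha | ha, hc | hc⟩ := hac <;> subst ha hc <;>
      refine ⟨?_, ?_, ?_, ?_⟩ <;> intro <;> linarith
  · exact absurd (cornerWeight_eq_zero hac) h.ne'

end CornerWeight

def routes (E : Finset (ℕ × ℕ)) : Finset Route := {1, 2} ×ˢ E ×ˢ {1, 2}

lemma mem_routes {E : Finset (ℕ × ℕ)} {r : Route} : r ∈ routes E ↔ IsRoute E r := by
  simp [routes, IsRoute]

lemma mem_Nbr {E : Finset (ℕ × ℕ)} {i j : ℕ} : j ∈ Nbr E i ↔ (i, j) ∈ E := by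
  simp [Nbr]

lemma mem_Nbr' {E : Finset (ℕ × ℕ)} {i j : ℕ} : i ∈ Nbr' E j ↔ (i, j) ∈ E := by
  simp [Nbr']

lemma sum_Nbr (E : Finset (ℕ × ℕ)) (i : ℕ) (f : ℕ × ℕ → ℝ) :
    ∑ j ∈ Nbr E i, f (i, j) = ∑ p ∈ E with p.1 = i, f p := by
  rw [Nbr, Finset.sum_image]
  · exact Finset.sum_congr rfl fun p hp => by rw [← (Finset.mem_filter.mp hp).2]
  · intro p hp q hq h
    exact Prod.ext ((Finset.mem_filter.mp hp).2.trans (Finset.mem_filter.mp hq).2.symm) h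

lemma sum_Nbr' (E : Finset (ℕ × ℕ)) (j : ℕ) (f : ℕ × ℕ → ℝ) :
    ∑ i ∈ Nbr' E j, f (i, j) = ∑ p ∈ E with p.2 = j, f p := by
  rw [Nbr', Finset.sum_image]
  · exact Finset.sum_congr rfl fun p hp => by rw [← (Finset.mem_filter.mp hp).2]
  · intro p hp q hq h
    exact Prod.ext h ((Finset.mem_filter.mp hp).2.trans (Finset.mem_filter.mp hq).2.symm)

def routeFlow (E : Finset (ℕ × ℕ)) : (Route → ℝ) →ₗ[ℝ] GEdge → ℝ :=
  ∑ r ∈ routes E, (LinearMap.proj r).smulRight (routeVec r)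

section RouteFlow

variable {E : Finset (ℕ × ℕ)}

lemma routeFlow_eq_sum (w : Route → ℝ) : routeFlow E w = ∑ r ∈ routes E, w r • routeVec r := by
  simp [routeFlow]

lemma routeFlow_apply (w : Route → ℝ) (e : GEdge) :
    routeFlow E w e = ∑ r ∈ routes E, w r * routeVec r e := by
  simp [routeFlow_eq_sum]

lemma routeFlow_beta (w : Route → ℝ) {p : ℕ × ℕ} (hp : p ∈ E) :
    routeFlow E w (β p) = w (1, p, 1) + w (1, p, 2) + (w (2, p, 1) + w (2, p, 2)) := by
  simp [routeFlow_apply, routes, Finset.sum_product, routeVec, ite_add_ite, hp]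

lemma routeFlow_alpha (w : Route → ℝ) {a : ℕ} (ha : a = 1 ∨ a = 2) (i : ℕ) :
    routeFlow E w (α a i) = ∑ j ∈ Nbr E i, (w (a, (i, j), 1) + w (a, (i, j), 2)) := by
  rw [sum_Nbr E i fun p => w (a, p, 1) + w (a, p, 2)]
  rcases ha with rfl | rfl <;> simp [routeFlow_apply, routes, Finset.sum_product, routeVec,
    Finset.sum_filter, Prod.ext_iff, eq_comm, ite_add_ite]

lemma routeFlow_gamma (w : Route → ℝ) {c : ℕ} (hc : c = 1 ∨ c = 2) (j : ℕ) :
    routeFlow E w (γ j c) = ∑ i ∈ Nbr' E j, (w (1, (i, j), c) + w (2, (i, j), c)) := by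
  rw [sum_Nbr' E j fun p => w (1, p, c) + w (2, p, c)]
  rcases hc with rfl | rfl <;> simp [routeFlow_apply, routes, Finset.sum_product, routeVec,
    Finset.sum_filter, Prod.ext_iff, eq_comm, Finset.sum_add_distrib]

lemma sum_routes (w : Route → ℝ) : ∑ r ∈ routes E, w r = ∑ p ∈ E, routeFlow E w (β p) := by
  rw [Finset.sum_congr rfl fun p hp => routeFlow_beta w hp]
  simp only [routes, Finset.sum_product, Finset.sum_pair (show (1 : ℕ) ≠ 2 by decide),
    Finset.sum_add_distrib]

variable {n m : ℕ}

lemma routeVec_eq_zero_of_not_isGEdge (hE : ∀ p ∈ E, 1 ≤ p.1 ∧ p.1 ≤ n ∧ 1 ≤ p.2 ∧ p.2 ≤ m)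
    {r : Route} (hr : IsRoute E r) {e : GEdge} (he : ¬IsGEdge n m E e) : routeVec r e = 0 := by
  obtain ⟨ha, hp, hc⟩ := hr
  have := hE _ hp
  rw [routeVec, if_neg]
  rintro (rfl | rfl | rfl) <;> simp_all [IsGEdge]

lemma routeFlow_eq_zero_of_not_isGEdge (hE : ∀ p ∈ E, 1 ≤ p.1 ∧ p.1 ≤ n ∧ 1 ≤ p.2 ∧ p.2 ≤ m)
    (w : Route → ℝ) {e : GEdge} (he : ¬IsGEdge n m E e) : routeFlow E w e = 0 := by
  rw [routeFlow_apply]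
  exact Finset.sum_eq_zero fun r hr => by
    rw [routeVec_eq_zero_of_not_isGEdge hE (mem_routes.mp hr) he, mul_zero]

lemma sum_alpha_eq_sum_beta (hE : ∀ p ∈ E, 1 ≤ p.1 ∧ p.1 ≤ n ∧ 1 ≤ p.2 ∧ p.2 ≤ m)
    {x : GEdge → ℝ}
    (hS : ∀ i ∈ Finset.Icc 1 n, x (α 1 i) + x (α 2 i) = ∑ j ∈ Nbr E i, x (β (i, j))) :
    ∑ i ∈ Finset.Icc 1 n, (x (α 1 i) + x (α 2 i)) = ∑ p ∈ E, x (β p) := by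
  rw [Finset.sum_congr rfl hS, Finset.sum_congr rfl fun i _ => sum_Nbr E i fun p => x (β p)]
  exact Finset.sum_fiberwise_of_maps_to
    (fun p hp => Finset.mem_Icc.mpr ⟨(hE p hp).1, (hE p hp).2.1⟩) _

lemma routeFlow_mem_flowPolytope (hE : ∀ p ∈ E, 1 ≤ p.1 ∧ p.1 ≤ n ∧ 1 ≤ p.2 ∧ p.2 ≤ m)
    {w : Route → ℝ} (hw : ∀ r, 0 ≤ w r) (hw1 : ∑ r ∈ routes E, w r = 1) :
    routeFlow E w ∈ FlowPolytope n m E := by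
  have hS : ∀ i ∈ Finset.Icc 1 n, routeFlow E w (α 1 i) + routeFlow E w (α 2 i) =
      ∑ j ∈ Nbr E i, routeFlow E w (β (i, j)) := by
    intro i _
    rw [routeFlow_alpha w (.inl rfl), routeFlow_alpha w (.inr rfl), ← Finset.sum_add_distrib]
    exact Finset.sum_congr rfl fun j hj => (routeFlow_beta w (mem_Nbr.mp hj)).symm
  refine ⟨fun e _ => ?_, fun e he => ?_, hS, fun j _ => ?_, ?_⟩
  · rw [routeFlow_apply]
    refine Finset.sum_nonneg fun r _ => mul_nonneg (hw r) ?_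
    unfold routeVec; split_ifs <;> norm_num
  · exact routeFlow_eq_zero_of_not_isGEdge hE w he
  · rw [routeFlow_gamma w (.inl rfl), routeFlow_gamma w (.inr rfl), ← Finset.sum_add_distrib]
    refine Finset.sum_congr rfl fun i hi => ?_
    rw [routeFlow_beta w (mem_Nbr'.mp hi)]
    ring
  · rw [sum_alpha_eq_sum_beta hE hS, ← sum_routes, hw1]

end RouteFlow

section CanonicalWeight

variable (E : Finset (ℕ × ℕ)) (x : GEdge → ℝ)

def alphaShare (i j : ℕ) : ℝ := greedyFill (Nbr E i) (fun k => x (β (i, k))) (x (α 1 i)) j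

def gammaShare (i j : ℕ) : ℝ := greedyFill (Nbr' E j) (fun k => x (β (k, j))) (x (γ j 1)) i

def canonicalWeight (r : Route) : ℝ :=
  if r.2.1 ∈ E then
    cornerWeight (x (β r.2.1)) (alphaShare E x r.2.1.1 r.2.1.2) (gammaShare E x r.2.1.1 r.2.1.2)
      r.1 r.2.2
  else 0

variable {E x} {n m : ℕ}

lemma canonicalWeight_of_mem {a c i j : ℕ} (hp : (i, j) ∈ E) :
    canonicalWeight E x (a, (i, j), c) =
      cornerWeight (x (β (i, j))) (alphaShare E x i j) (gammaShare E x i j) a c :=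
  if_pos hp

lemma canonicalWeight_eq_zero {r : Route} (hr : ¬IsRoute E r) : canonicalWeight E x r = 0 := by
  unfold canonicalWeight
  split_ifs with hp
  · exact cornerWeight_eq_zero fun h => hr ⟨h.1, hp, h.2⟩
  · rfl

lemma alphaShare_nonneg (i j : ℕ) : 0 ≤ alphaShare E x i j := greedyFill_nonneg j

lemma gammaShare_nonneg (i j : ℕ) : 0 ≤ gammaShare E x i j := greedyFill_nonneg i

lemma alphaShare_le (hx : x ∈ FlowPolytope n m E) {i j : ℕ} (hp : (i, j) ∈ E) :
    alphaShare E x i j ≤ x (β (i, j)) :=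
  greedyFill_le (hx.1 _ hp)

lemma gammaShare_le (hx : x ∈ FlowPolytope n m E) {i j : ℕ} (hp : (i, j) ∈ E) :
    gammaShare E x i j ≤ x (β (i, j)) :=
  greedyFill_le (hx.1 _ hp)

lemma alphaShare_eq_zero_of_lt (hx : x ∈ FlowPolytope n m E) {i j k : ℕ} (hp : (i, j) ∈ E)
    (hjk : j < k) (h : alphaShare E x i j < x (β (i, j))) : alphaShare E x i k = 0 :=
  greedyFill_eq_zero_of_lt (fun _ hl => hx.1 _ (mem_Nbr.mp hl)) (mem_Nbr.mpr hp) hjk h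

lemma gammaShare_eq_zero_of_lt (hx : x ∈ FlowPolytope n m E) {i j k : ℕ} (hp : (i, j) ∈ E)
    (hik : i < k) (h : gammaShare E x i j < x (β (i, j))) : gammaShare E x k j = 0 :=
  greedyFill_eq_zero_of_lt (fun _ hl => hx.1 _ (mem_Nbr'.mp hl)) (mem_Nbr'.mpr hp) hik h

lemma canonicalWeight_nonneg (hx : x ∈ FlowPolytope n m E) (r : Route) :
    0 ≤ canonicalWeight E x r := by
  unfold canonicalWeight
  split_ifs with hp
  · exact cornerWeight_nonneg (alphaShare_nonneg _ _) (alphaShare_le hx hp) (gammaShare_nonneg _ _)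
      (gammaShare_le hx hp) _ _
  · exact le_rfl

lemma isClique_support_canonicalWeight (hx : x ∈ FlowPolytope n m E) :
    IsClique E (Function.support (canonicalWeight E x)) := by
  have hroute {r : Route} (hr : canonicalWeight E x r ≠ 0) : IsRoute E r :=
    not_not.mp (mt canonicalWeight_eq_zero hr)
  have hbounds {a c i j : ℕ} (hr : canonicalWeight E x (a, (i, j), c) ≠ 0) :
      (a = 1 → 0 < alphaShare E x i j) ∧ (a = 2 → alphaShare E x i j < x (β (i, j))) ∧
        (c = 1 → 0 < gammaShare E x i j) ∧ (c = 2 → gammaShare E x i j < x (β (i, j))) := by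
    have hp : (i, j) ∈ E := (hroute hr).2.1
    have hpos := (canonicalWeight_nonneg hx _).lt_of_ne' hr
    rw [canonicalWeight_of_mem hp] at hpos
    exact cornerWeight_pos_bounds (alphaShare_nonneg i j) (alphaShare_le hx hp)
      (gammaShare_nonneg i j) (gammaShare_le hx hp) hpos
  refine ⟨fun r hr => hroute hr, ?_⟩
  rintro ⟨a, ⟨i, j⟩, c⟩ hr ⟨a', ⟨i', j'⟩, c'⟩ hr' - hconf
  have hp : (i, j) ∈ E := (hroute hr).2.1
  have hp' : (i', j') ∈ E := (hroute hr').2.1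
  obtain ⟨hA1, hA2, hB1, hB2⟩ := hbounds hr
  obtain ⟨hA1', hA2', hB1', hB2'⟩ := hbounds hr'
  dsimp only [Conflict] at hconf
  rcases hconf with ⟨⟨⟩, ⟨rfl, rfl, rfl, rfl⟩ | ⟨rfl, rfl, rfl, rfl⟩⟩ |
      ⟨rfl, -, ⟨hlt, rfl, rfl⟩ | ⟨hlt, rfl, rfl⟩⟩ | ⟨rfl, -, ⟨hlt, rfl, rfl⟩ | ⟨hlt, rfl, rfl⟩⟩
  · rw [Function.mem_support, canonicalWeight_of_mem hp] at hr hr'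
    exact cornerWeight_one_two_eq_zero_or.elim hr hr'
  · rw [Function.mem_support, canonicalWeight_of_mem hp] at hr hr'
    exact cornerWeight_one_two_eq_zero_or.elim hr' hr
  · linarith [alphaShare_eq_zero_of_lt hx hp hlt (hA2 rfl), hA1' rfl]
  · linarith [alphaShare_eq_zero_of_lt hx hp' hlt (hA2' rfl), hA1 rfl]
  · linarith [gammaShare_eq_zero_of_lt hx hp hlt (hB2 rfl), hB1' rfl]
  · linarith [gammaShare_eq_zero_of_lt hx hp' hlt (hB2' rfl), hB1 rfl]

lemma sum_alphaShare (hx : x ∈ FlowPolytope n m E) {i : ℕ} (hi : i ∈ Finset.Icc 1 n) :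
    ∑ j ∈ Nbr E i, alphaShare E x i j = x (α 1 i) := by
  unfold alphaShare
  rw [sum_greedyFill (hx.1 (α 1 i) ⟨.inl rfl, hi⟩)
    fun j hj => hx.1 _ (mem_Nbr.mp hj), ← hx.2.2.1 i hi]
  exact min_eq_left (le_add_of_nonneg_right (hx.1 (α 2 i) ⟨.inr rfl, hi⟩))

lemma sum_gammaShare (hx : x ∈ FlowPolytope n m E) {j : ℕ} (hj : j ∈ Finset.Icc 1 m) :
    ∑ i ∈ Nbr' E j, gammaShare E x i j = x (γ j 1) := by
  unfold gammaShare
  rw [sum_greedyFill (hx.1 (γ j 1) ⟨hj, .inl rfl⟩)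
    fun i hi => hx.1 _ (mem_Nbr'.mp hi), hx.2.2.2.1 j hj]
  exact min_eq_left (le_add_of_nonneg_right (hx.1 (γ j 2) ⟨hj, .inr rfl⟩))

lemma routeFlow_canonicalWeight (hE : ∀ p ∈ E, 1 ≤ p.1 ∧ p.1 ≤ n ∧ 1 ≤ p.2 ∧ p.2 ≤ m)
    (hx : x ∈ FlowPolytope n m E) : routeFlow E (canonicalWeight E x) = x := by
  funext e
  by_cases he : IsGEdge n m E e
  swap
  · rw [routeFlow_eq_zero_of_not_isGEdge hE _ he, hx.2.1 e he]
  rcases e with ⟨a, i⟩ | ⟨i, j⟩ | ⟨j, c⟩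
  · obtain ⟨ha, hi⟩ := he
    rw [routeFlow_alpha _ ha, Finset.sum_congr rfl fun j hj => by
      rw [canonicalWeight_of_mem (mem_Nbr.mp hj), canonicalWeight_of_mem (mem_Nbr.mp hj)]]
    rcases ha with rfl | rfl
    · simp only [cornerWeight_row_one]
      exact sum_alphaShare hx hi
    · simp only [cornerWeight_row_two]
      rw [Finset.sum_sub_distrib, sum_alphaShare hx hi, ← hx.2.2.1 i hi]
      ring
  · rw [routeFlow_beta _ he, canonicalWeight_of_mem he, canonicalWeight_of_mem he,
      canonicalWeight_of_mem he, canonicalWeight_of_mem he, cornerWeight_row_one,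
      cornerWeight_row_two]
    ring
  · obtain ⟨hj, hc⟩ := he
    rw [routeFlow_gamma _ hc, Finset.sum_congr rfl fun i hi => by
      rw [canonicalWeight_of_mem (mem_Nbr'.mp hi), canonicalWeight_of_mem (mem_Nbr'.mp hi)]]
    rcases hc with rfl | rfl
    · simp only [cornerWeight_col_one]
      exact sum_gammaShare hx hj
    · simp only [cornerWeight_col_two]
      rw [Finset.sum_sub_distrib, sum_gammaShare hx hj, hx.2.2.2.1 j hj]
      ring

lemma sum_canonicalWeight (hE : ∀ p ∈ E, 1 ≤ p.1 ∧ p.1 ≤ n ∧ 1 ≤ p.2 ∧ p.2 ≤ m)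
    (hx : x ∈ FlowPolytope n m E) : ∑ r ∈ routes E, canonicalWeight E x r = 1 := by
  rw [sum_routes, routeFlow_canonicalWeight hE hx, ← sum_alpha_eq_sum_beta hE hx.2.2.1, hx.2.2.2.2]

end CanonicalWeight

section Uniqueness

variable {E : Finset (ℕ × ℕ)} {C : Set Route} {w : Route → ℝ}

lemma not_conflict_self (r : Route) : ¬Conflict r r := by
  unfold Conflict; omega

lemma eq_zero_of_conflict (hC : IsClique E C) (hw : Function.support w ⊆ C) {r r' : Route}
    (hconf : Conflict r r') (hr' : w r' ≠ 0) : w r = 0 := by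
  by_contra hr
  exact hC.2 r (hw hr) r' (hw hr') (fun h => not_conflict_self r (h ▸ hconf)) hconf

lemma ne_zero_or_ne_zero_of_add_ne_zero {a b : ℝ} (h : a + b ≠ 0) : a ≠ 0 ∨ b ≠ 0 := by
  by_contra! h'
  exact h (by rw [h'.1, h'.2, add_zero])

lemma alphaShare_routeFlow (hC : IsClique E C) (hw0 : ∀ r, 0 ≤ w r) (hw : Function.support w ⊆ C)
    {i j : ℕ} (hp : (i, j) ∈ E) :
    w (1, (i, j), 1) + w (1, (i, j), 2) = alphaShare E (routeFlow E w) i j := by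
  unfold alphaShare
  rw [routeFlow_alpha w (.inl rfl)]
  refine eq_greedyFill_of_coherent (M := fun k => w (1, (i, k), 1) + w (1, (i, k), 2))
    (fun k _ => add_nonneg (hw0 _) (hw0 _)) (fun k hk => ?_) (fun k hk l _ hkl hlt => ?_)
    (mem_Nbr.mpr hp)
  · rw [routeFlow_beta w (mem_Nbr.mp hk)]
    linarith [hw0 (2, (i, k), 1), hw0 (2, (i, k), 2)]
  · rw [routeFlow_beta w (mem_Nbr.mp hk)] at hlt
    by_contra hl
    have hconf (c c' : ℕ) : Conflict (2, (i, k), c) (1, (i, l), c') :=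
      .inr (.inl ⟨rfl, hkl.ne, .inl ⟨hkl, rfl, rfl⟩⟩)
    obtain ⟨c', hc'⟩ : ∃ c', w (1, (i, l), c') ≠ 0 :=
      (ne_zero_or_ne_zero_of_add_ne_zero hl).elim (⟨1, ·⟩) (⟨2, ·⟩)
    linarith [eq_zero_of_conflict hC hw (hconf 1 c') hc',
      eq_zero_of_conflict hC hw (hconf 2 c') hc']

lemma gammaShare_routeFlow (hC : IsClique E C) (hw0 : ∀ r, 0 ≤ w r) (hw : Function.support w ⊆ C)
    {i j : ℕ} (hp : (i, j) ∈ E) :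
    w (1, (i, j), 1) + w (2, (i, j), 1) = gammaShare E (routeFlow E w) i j := by
  unfold gammaShare
  rw [routeFlow_gamma w (.inl rfl)]
  refine eq_greedyFill_of_coherent (M := fun k => w (1, (k, j), 1) + w (2, (k, j), 1))
    (fun k _ => add_nonneg (hw0 _) (hw0 _)) (fun k hk => ?_) (fun k hk l _ hkl hlt => ?_)
    (mem_Nbr'.mpr hp)
  · rw [routeFlow_beta w (mem_Nbr'.mp hk)]
    linarith [hw0 (1, (k, j), 2), hw0 (2, (k, j), 2)]
  · rw [routeFlow_beta w (mem_Nbr'.mp hk)] at hlt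
    by_contra hl
    have hconf (a a' : ℕ) : Conflict (a, (k, j), 2) (a', (l, j), 1) :=
      .inr (.inr ⟨rfl, hkl.ne, .inl ⟨hkl, rfl, rfl⟩⟩)
    obtain ⟨a', ha'⟩ : ∃ a', w (a', (l, j), 1) ≠ 0 :=
      (ne_zero_or_ne_zero_of_add_ne_zero hl).elim (⟨1, ·⟩) (⟨2, ·⟩)
    linarith [eq_zero_of_conflict hC hw (hconf 1 a') ha',
      eq_zero_of_conflict hC hw (hconf 2 a') ha']

theorem canonicalWeight_routeFlow (hC : IsClique E C) (hw0 : ∀ r, 0 ≤ w r)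
    (hw : Function.support w ⊆ C) : canonicalWeight E (routeFlow E w) = w := by
  funext ⟨a, ⟨i, j⟩, c⟩
  by_cases hr : IsRoute E (a, (i, j), c)
  · obtain ⟨ha, hp, hc⟩ := hr
    have hoff : w (1, (i, j), 2) = 0 ∨ w (2, (i, j), 1) = 0 := by
      by_contra! h
      exact h.1 (eq_zero_of_conflict hC hw (r := (1, (i, j), 2)) (r' := (2, (i, j), 1))
        (.inl ⟨rfl, .inl ⟨rfl, rfl, rfl, rfl⟩⟩) h.2)
    rw [canonicalWeight_of_mem hp, ← alphaShare_routeFlow hC hw0 hw hp,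
      ← gammaShare_routeFlow hC hw0 hw hp, routeFlow_beta w hp]
    exact (eq_cornerWeight (w := fun a c => w (a, (i, j), c)) (fun _ _ => hw0 _) hoff ha hc).symm
  · rw [canonicalWeight_eq_zero hr]
    by_contra h
    exact hr (hC.1 _ (hw (Ne.symm h)))

end Uniqueness

section Simplices

variable {E : Finset (ℕ × ℕ)} {n m : ℕ}

lemma exists_isMaxClique_superset {C : Set Route} (hC : IsClique E C) :
    ∃ D, IsMaxClique E D ∧ C ⊆ D := by
  have hchain (c : Set (Set Route)) (hc : c ⊆ {D | IsClique E D}) (hchain : IsChain (· ⊆ ·) c) :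
      IsClique E (⋃₀ c) := by
    refine ⟨fun r ⟨D, hD, hr⟩ => (hc hD).1 r hr, ?_⟩
    rintro r ⟨D, hD, hr⟩ r' ⟨D', hD', hr'⟩
    rcases hchain.total hD hD' with h | h
    exacts [(hc hD').2 r (h hr) r' hr', (hc hD).2 r hr r' (h hr')]
  obtain ⟨D, hCD, hD⟩ := zorn_subset_nonempty {D | IsClique E D}
    (fun c hc hc' _ => ⟨⋃₀ c, hchain c hc hc', fun _ => Set.subset_sUnion_of_mem⟩) C hC
  exact ⟨D, ⟨hD.1, fun D' hD' hDD' => (hD.2 hD' hDD').antisymm hDD'⟩, hCD⟩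

variable (E) in
def convexWeights (C : Set Route) : Set (Route → ℝ) :=
  {w | (∀ r, 0 ≤ w r) ∧ Function.support w ⊆ C ∧ ∑ r ∈ routes E, w r = 1}

lemma convex_convexWeights (C : Set Route) : Convex ℝ (convexWeights E C) := by
  rintro w ⟨hw0, hw, hw1⟩ w' ⟨hw0', hw', hw1'⟩ a b ha hb hab
  refine ⟨fun r => ?_, ?_, ?_⟩
  · exact add_nonneg (mul_nonneg ha (hw0 r)) (mul_nonneg hb (hw0' r))
  · exact (Function.support_add _ _).trans (Set.union_subset
      ((Function.support_smul_subset_right _ _).trans hw)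
      ((Function.support_smul_subset_right _ _).trans hw'))
  · simp [Finset.sum_add_distrib, ← Finset.mul_sum, hw1, hw1', hab]

lemma convexHull_routeVec_image {C : Set Route} (hC : ∀ r ∈ C, IsRoute E r) :
    convexHull ℝ (routeVec '' C) = routeFlow E '' convexWeights E C := by
  classical
  refine (convexHull_min ?_ ((convex_convexWeights C).linear_image _)).antisymm ?_
  · rintro _ ⟨r, hr, rfl⟩
    have hrE : r ∈ routes E := mem_routes.mpr (hC r hr)
    refine ⟨Pi.single r 1, ⟨fun r' => by
      rw [Pi.single_apply]; split_ifs <;> norm_num,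
      Pi.support_single_subset.trans (Set.singleton_subset_iff.mpr hr), ?_⟩, ?_⟩
    · rw [Finset.sum_pi_single' r 1, if_pos hrE]
    · simp [routeFlow_eq_sum, Pi.single_apply, ite_smul, hrE]
  · rintro _ ⟨w, ⟨hw0, hw, hw1⟩, rfl⟩
    have hfilter {M : Type} [AddCommMonoid M] {f : Route → M} (hf : ∀ r, w r = 0 → f r = 0) :
        ∑ r ∈ routes E with r ∈ C, f r = ∑ r ∈ routes E, f r :=
      Finset.sum_filter_of_ne fun r _ hr => hw fun h => hr (hf r h)
    rw [routeFlow_eq_sum, ← hfilter fun r h => by rw [h, zero_smul]]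
    refine (convex_convexHull ℝ _).sum_mem (fun r _ => hw0 r) ?_ fun r hr =>
      subset_convexHull ℝ _ ⟨r, (Finset.mem_filter.mp hr).2, rfl⟩
    rw [hfilter fun r h => h, hw1]

lemma linearIndepOn_routeVec {C : Set Route} (hC : IsClique E C) : LinearIndepOn ℝ routeVec C := by
  rw [linearIndepOn_iff]
  intro l hl hl0
  have hsupp : Function.support l ⊆ C := by simpa [Finsupp.mem_supported] using hl
  have hflow : routeFlow E l = 0 := by
    rw [← hl0, Finsupp.linearCombination_apply, Finsupp.sum, routeFlow_eq_sum]
    refine (Finset.sum_subset (fun r hr => mem_routes.mpr (hC.1 r (hsupp ?_)))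
      fun r _ hr => ?_).symm
    · simpa using hr
    · rw [Finsupp.notMem_support_iff.mp hr, zero_smul]
  have hpos : Function.support (⇑l)⁺ ⊆ C := fun r h => hsupp fun h0 => h (by simp [h0])
  have hneg : Function.support (⇑l)⁻ ⊆ C := fun r h => hsupp fun h0 => h (by simp [h0])
  have heq : (⇑l)⁺ = (⇑l)⁻ := by
    rw [← canonicalWeight_routeFlow (w := (⇑l)⁺) hC (fun r => posPart_nonneg (l r)) hpos,
      ← canonicalWeight_routeFlow (w := (⇑l)⁻) hC (fun r => negPart_nonneg (l r)) hneg]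
    congr 1
    rw [← sub_eq_zero, ← map_sub, posPart_sub_negPart, hflow]
  ext r
  simpa [heq] using (congrFun (posPart_sub_negPart (⇑l)) r).symm

lemma flowPolytope_eq_iUnion (hE : ∀ p ∈ E, 1 ≤ p.1 ∧ p.1 ≤ n ∧ 1 ≤ p.2 ∧ p.2 ≤ m) :
    FlowPolytope n m E =
      ⋃ C ∈ {C : Set Route | IsMaxClique E C}, convexHull ℝ (routeVec '' C) := by
  ext x
  simp only [Set.mem_iUnion, Set.mem_ofPred_eq, exists_prop]
  constructor
  · intro hx
    obtain ⟨D, hD, hsub⟩ := exists_isMaxClique_superset (isClique_support_canonicalWeight hx)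
    refine ⟨D, hD, ?_⟩
    rw [convexHull_routeVec_image hD.1.1]
    exact ⟨_, ⟨canonicalWeight_nonneg hx, hsub, sum_canonicalWeight hE hx⟩,
      routeFlow_canonicalWeight hE hx⟩
  · rintro ⟨D, hD, hx⟩
    rw [convexHull_routeVec_image hD.1.1] at hx
    obtain ⟨w, ⟨hw0, -, hw1⟩, rfl⟩ := hx
    exact routeFlow_mem_flowPolytope hE hw0 hw1

lemma convexHull_routeVec_inter {C C' : Set Route} (hC : IsClique E C) (hC' : IsClique E C') :
    convexHull ℝ (routeVec '' C) ∩ convexHull ℝ (routeVec '' C') =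
      convexHull ℝ (routeVec '' (C ∩ C')) := by
  refine Set.Subset.antisymm ?_ (Set.subset_inter
    (convexHull_mono (Set.image_mono Set.inter_subset_left))
    (convexHull_mono (Set.image_mono Set.inter_subset_right)))
  rw [convexHull_routeVec_image hC.1, convexHull_routeVec_image hC'.1,
    convexHull_routeVec_image fun r hr => hC.1 r hr.1]
  rintro _ ⟨⟨w, ⟨hw0, hw, hw1⟩, rfl⟩, ⟨w', ⟨hw0', hw', -⟩, hww'⟩⟩
  obtain rfl : w' = w := by
    rw [← canonicalWeight_routeFlow hC' hw0' hw', hww', canonicalWeight_routeFlow hC hw0 hw]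
  exact ⟨w', ⟨hw0, Set.subset_inter hw hw', hw1⟩, rfl⟩

end Simplices

theorem dkk_triangulation_general (n m : ℕ) (E : Finset (ℕ × ℕ))
    (hE : ∀ p ∈ E, 1 ≤ p.1 ∧ p.1 ≤ n ∧ 1 ≤ p.2 ∧ p.2 ≤ m) :
    (∀ C : Set Route, IsClique E C →
      AffineIndependent ℝ (fun r : {r : Route // r ∈ C} => routeVec (r : Route))) ∧
    (FlowPolytope n m E =
      ⋃ C ∈ {C : Set Route | IsMaxClique E C}, convexHull ℝ (routeVec '' C)) ∧
    (∀ C C' : Set Route, IsClique E C → IsClique E C' →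
      convexHull ℝ (routeVec '' C) ∩ convexHull ℝ (routeVec '' C') =
        convexHull ℝ (routeVec '' (C ∩ C'))) :=
  ⟨fun _ hC => (linearIndepOn_routeVec hC).linearIndependent.affineIndependent,
    flowPolytope_eq_iUnion hE, fun _ _ => convexHull_routeVec_inter⟩

/-- The DKK clique simplices of the canonical bipartite framing triangulate
the flow polytope `F₁(G(H))`. -/
theorem dkk_triangulation (n m : ℕ) (hn : 1 ≤ n) (hm : 1 ≤ m) (E : Finset (ℕ × ℕ))
    (hE : ∀ p ∈ E, 1 ≤ p.1 ∧ p.1 ≤ n ∧ 1 ≤ p.2 ∧ p.2 ≤ m)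
    (hdegS : ∀ i ∈ Finset.Icc 1 n, 2 ≤ (Nbr E i).card)
    (hdegT : ∀ j ∈ Finset.Icc 1 m, 2 ≤ (Nbr' E j).card) :
    (∀ C : Set Route, IsClique E C →
      AffineIndependent ℝ (fun r : {r : Route // r ∈ C} => routeVec (r : Route))) ∧
    (FlowPolytope n m E =
      ⋃ C ∈ {C : Set Route | IsMaxClique E C}, convexHull ℝ (routeVec '' C)) ∧
    (∀ C C' : Set Route, IsClique E C → IsClique E C' →
      convexHull ℝ (routeVec '' C) ∩ convexHull ℝ (routeVec '' C') =
        convexHull ℝ (routeVec '' (C ∩ C'))) :=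
  dkk_triangulation_general n m E hE
end
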